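/- Soundness of the DPLL proof system: for every valuation Γ and every CNF formula Δ, if the sequent Γ ⊢ Δ is derivable in the DPLL proof system, then Γ and Δ are incompatible, i.e. there is no model M with M ⊨ Γ and M ⊨ Δ. -/
import Mathlib


/-- A literal: a propositional variable (ℕ) with a sign. -/
structure Lit where
  var : ℕ
  sign : Bool
deriving DecidableEq

/-- The opposite literal. -/
def Lit.neg (l : Lit) : Lit := ⟨l.var, !l.sign⟩

/-- A clause: a finite set of literals, read disjunctively. -/
abbrev Clause := Finset Lit

/-- A CNF formula: a finite set of clauses, read conjunctively. -/
abbrev CNF := Finset Clause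

/-- A valuation: a finite set of literals, read conjunctively. -/
abbrev Valu := Finset Lit

/-- A model: a boolean assignment to literals respecting negation. -/
def IsModel (M : Lit → Bool) : Prop := ∀ l : Lit, M l = true ↔ ¬ (M (Lit.neg l) = true)

/-- `M ⊨ Γ` for a valuation (set of literals) `Γ`. -/
def SatVal (M : Lit → Bool) (Γ : Valu) : Prop := ∀ l ∈ Γ, M l = true

/-- `M ⊨ Δ` for a CNF formula `Δ`. -/
def SatCNF (M : Lit → Bool) (Δ : CNF) : Prop := ∀ C ∈ Δ, ∃ l ∈ C, M l = true

/-- A consistent valuation. -/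
def Consistent (Γ : Valu) : Prop := ∀ l ∈ Γ, Lit.neg l ∉ Γ

/-- The DPLL derivability relation `Γ ⊢ Δ`. -/
inductive DPLL : Valu → CNF → Prop
  | conflict (Γ : Valu) (Δ : CNF) : (∅ : Clause) ∈ Δ → DPLL Γ Δ
  | unit (Γ : Valu) (Δ : CNF) (l : Lit) : ({l} : Clause) ∈ Δ →
      DPLL (insert l Γ) (Δ.erase {l}) → DPLL Γ Δ
  | elim (Γ : Valu) (Δ : CNF) (C : Clause) (l : Lit) : l ∈ Γ → l ∈ C → C ∈ Δ →
      DPLL Γ (Δ.erase C) → DPLL Γ Δ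
  | red (Γ : Valu) (Δ : CNF) (C : Clause) (l : Lit) : l ∈ Γ → Lit.neg l ∈ C → C ∈ Δ →
      DPLL Γ (insert (C.erase (Lit.neg l)) (Δ.erase C)) → DPLL Γ Δ
  | split (Γ : Valu) (Δ : CNF) (l : Lit) :
      DPLL (insert l Γ) Δ → DPLL (insert (Lit.neg l) Γ) Δ → DPLL Γ Δ

/-- The sized DPLL derivability relation `Γ ⊢ⁿ Δ`. -/
inductive DPLLn : Valu → ℕ → CNF → Prop
  | conflict (Γ : Valu) (Δ : CNF) : (∅ : Clause) ∈ Δ → DPLLn Γ 0 Δ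
  | unit (Γ : Valu) (Δ : CNF) (l : Lit) (n : ℕ) : ({l} : Clause) ∈ Δ →
      DPLLn (insert l Γ) n (Δ.erase {l}) → DPLLn Γ (n + 1) Δ
  | elim (Γ : Valu) (Δ : CNF) (C : Clause) (l : Lit) (n : ℕ) : l ∈ Γ → l ∈ C → C ∈ Δ →
      DPLLn Γ n (Δ.erase C) → DPLLn Γ (n + 1) Δ
  | red (Γ : Valu) (Δ : CNF) (C : Clause) (l : Lit) (n : ℕ) : l ∈ Γ → Lit.neg l ∈ C → C ∈ Δ →
      DPLLn Γ n (insert (C.erase (Lit.neg l)) (Δ.erase C)) → DPLLn Γ (n + 1) Δ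
  | split (Γ : Valu) (Δ : CNF) (l : Lit) (n m : ℕ) :
      DPLLn (insert l Γ) n Δ → DPLLn (insert (Lit.neg l) Γ) m Δ → DPLLn Γ (n + m + 1) Δ

/-- The sized resolution derivability relation `Δ ⊢ᵣⁿ C`. -/
inductive Res : CNF → ℕ → Clause → Prop
  | sub (Δ : CNF) (C₀ C : Clause) : C₀ ∈ Δ → C₀ ⊆ C → Res Δ 0 C
  | res (Δ : CNF) (C C' : Clause) (l : Lit) (n m : ℕ) :
      Res Δ n (insert l C) → Res Δ m (insert (Lit.neg l) C') → Res Δ (n + m + 1) (C ∪ C')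

/-- Soundness of the DPLL proof system. -/
theorem dpll_soundness (Γ : Valu) (Δ : CNF) (h : DPLL Γ Δ) :
    ¬ ∃ M : Lit → Bool, IsModel M ∧ SatVal M Γ ∧ SatCNF M Δ := by
  induction h with
  | conflict Γ Δ hmem =>
    rintro ⟨M, hM, hΓ, hΔ⟩
    obtain ⟨l, hl, -⟩ := hΔ ∅ hmem
    exact absurd hl (Finset.notMem_empty l)
  | unit Γ Δ l hmem _ ih =>
    rintro ⟨M, hM, hΓ, hΔ⟩
    obtain ⟨l', hl', hMl'⟩ := hΔ {l} hmem
    rw [Finset.mem_singleton] at hl'; subst hl'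
    exact ih ⟨M, hM, fun x hx => by
      rcases Finset.mem_insert.mp hx with h | h
      · exact h ▸ hMl'
      · exact hΓ x h,
      fun C hC => hΔ C (Finset.mem_of_mem_erase hC)⟩
  | elim Γ Δ C l hlΓ hlC hCΔ _ ih =>
    rintro ⟨M, hM, hΓ, hΔ⟩
    exact ih ⟨M, hM, hΓ, fun D hD => hΔ D (Finset.mem_of_mem_erase hD)⟩
  | red Γ Δ C l hlΓ hlC hCΔ _ ih =>
    rintro ⟨M, hM, hΓ, hΔ⟩
    refine ih ⟨M, hM, hΓ, fun D hD => ?_⟩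
    rcases Finset.mem_insert.mp hD with h | h
    · subst h
      obtain ⟨l', hl', hMl'⟩ := hΔ C hCΔ
      refine ⟨l', Finset.mem_erase.mpr ⟨?_, hl'⟩, hMl'⟩
      rintro rfl
      exact ((hM l).mp (hΓ l hlΓ)) hMl'
    · exact hΔ D (Finset.mem_of_mem_erase h)
  | split Γ Δ l _ _ ih1 ih2 =>
    rintro ⟨M, hM, hΓ, hΔ⟩
    by_cases hMl : M l = true
    · exact ih1 ⟨M, hM, fun x hx => by
        rcases Finset.mem_insert.mp hx with h | h
        · exact h ▸ hMl
        · exact hΓ x h, hΔ⟩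
    · have : M (Lit.neg l) = true := by
        by_contra hc
        exact hMl ((hM l).mpr hc)
      exact ih2 ⟨M, hM, fun x hx => by
        rcases Finset.mem_insert.mp hx with h | h
        · exact h ▸ this
        · exact hΓ x h, hΔ⟩
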